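/- For every i ∈ {1,…,n}, every j ∈ {0,1}, and every continuous function f : B → ℝ on the unit cube B with f(x)/(xᵀx) bounded on B ∖ {0}, the weighted gain bound sup_{x ∈ B, x ≠ 0} |(g_{i,j} f)(x)| / (xᵀx) ≤ sup_{x ∈ B, x ≠ 0} |f(x)| / (xᵀx) holds. -/

import Mathlib

/-! Since `f` is continuous and `|f x| ≤ M · xᵀx` off the origin, with `M` the right-hand
supremum, also `f 0 = 0`, so the bound holds on all of `B`. Both operators only read `f` at
points `x` with the `i`-th coordinate replaced by some `s` with `|s| ≤ |x_i| ≤ 1`; such points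
stay in `B` and have smaller squared norm, and the integral runs over an interval of length
`|x_i| ≤ 1`. -/

def cubeB (n : ℕ) : Set (Fin n → ℝ) := {x | ∀ i, |x i| ≤ 1}

def sqnorm (n : ℕ) (x : Fin n → ℝ) : ℝ := ∑ k, x k ^ 2

noncomputable def gop (n : ℕ) (i : Fin n) (j : ℕ) (h : (Fin n → ℝ) → ℝ) :
    (Fin n → ℝ) → ℝ :=
  fun x => if j = 0 then h (Function.update x i 0)
    else ∫ s in (0:ℝ)..(x i), h (Function.update x i s)

open Filter Topology Interval

theorem eq_zero_of_abs_le_of_tendsto_zero {X : Type*} [TopologicalSpace X] {a : X}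
    [(𝓝[≠] a).NeBot] {f g : X → ℝ} (hf : ContinuousAt f a) (hg : Tendsto g (𝓝[≠] a) (𝓝 0))
    (hfg : ∀ᶠ y in 𝓝[≠] a, |f y| ≤ g y) : f a = 0 :=
  abs_nonpos_iff.mp <|
    le_of_tendsto_of_tendsto (hf.abs.tendsto.mono_left nhdsWithin_le_nhds) hg hfg

section Cube

variable {n : ℕ}

theorem cubeB_eq_closedBall (n : ℕ) : cubeB n = Metric.closedBall 0 1 := by
  ext x
  simp [cubeB, pi_norm_le_iff_of_nonneg, Real.norm_eq_abs]

theorem cubeB_mem_nhds_zero (n : ℕ) : cubeB n ∈ 𝓝 0 := by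
  rw [cubeB_eq_closedBall]
  exact Metric.closedBall_mem_nhds 0 one_pos

theorem update_mem_cubeB {x : Fin n → ℝ} (hx : x ∈ cubeB n) (i : Fin n) {s : ℝ}
    (hs : |s| ≤ |x i|) : Function.update x i s ∈ cubeB n := by
  intro k
  rcases eq_or_ne k i with rfl | hk
  · simpa using hs.trans (hx k)
  · simpa [Function.update_of_ne hk] using hx k

theorem sqnorm_nonneg (x : Fin n → ℝ) : 0 ≤ sqnorm n x :=
  Finset.sum_nonneg fun k _ => sq_nonneg (x k)

theorem sqnorm_pos {x : Fin n → ℝ} (hx : x ≠ 0) : 0 < sqnorm n x := by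
  obtain ⟨k, hk⟩ := Function.ne_iff.mp hx
  exact Finset.sum_pos' (fun k _ => sq_nonneg (x k)) ⟨k, Finset.mem_univ k, sq_pos_of_ne_zero hk⟩

theorem continuous_sqnorm (n : ℕ) : Continuous (sqnorm n) := by
  unfold sqnorm
  fun_prop

theorem sqnorm_update_le (x : Fin n → ℝ) (i : Fin n) {s : ℝ} (hs : |s| ≤ |x i|) :
    sqnorm n (Function.update x i s) ≤ sqnorm n x := by
  refine Finset.sum_le_sum fun k _ => ?_
  rcases eq_or_ne k i with rfl | hk
  · simpa using sq_le_sq.mpr hs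
  · simp [Function.update_of_ne hk]

theorem abs_le_mul_sqnorm_of_continuousOn [Nonempty (Fin n)] {f : (Fin n → ℝ) → ℝ} {C : ℝ}
    (hf : ContinuousOn f (cubeB n)) (hC : ∀ y ∈ cubeB n \ {0}, |f y| ≤ C * sqnorm n y) :
    ∀ y ∈ cubeB n, |f y| ≤ C * sqnorm n y := by
  have hf0 : f 0 = 0 := by
    refine eq_zero_of_abs_le_of_tendsto_zero (g := fun y => C * sqnorm n y)
      (hf.continuousAt (cubeB_mem_nhds_zero n)) ?_ ?_
    · have := ((continuous_sqnorm n).tendsto 0).const_mul C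
      simpa [sqnorm] using this.mono_left nhdsWithin_le_nhds
    · filter_upwards [nhdsWithin_le_nhds (cubeB_mem_nhds_zero n), self_mem_nhdsWithin]
        with y hy hy0 using hC y ⟨hy, hy0⟩
  intro y hy
  rcases eq_or_ne y 0 with rfl | hy0
  · simp [hf0, sqnorm]
  · exact hC y ⟨hy, hy0⟩

theorem abs_gop_le {f : (Fin n → ℝ) → ℝ} {M : ℝ} (hM : 0 ≤ M)
    (hf : ∀ y ∈ cubeB n, |f y| ≤ M * sqnorm n y) (i : Fin n) (j : ℕ) {x : Fin n → ℝ}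
    (hx : x ∈ cubeB n) : |gop n i j f x| ≤ M * sqnorm n x := by
  have hupdate : ∀ s, |s| ≤ |x i| → |f (Function.update x i s)| ≤ M * sqnorm n x :=
    fun s hs => (hf _ (update_mem_cubeB hx i hs)).trans
      (mul_le_mul_of_nonneg_left (sqnorm_update_le x i hs) hM)
  unfold gop
  split_ifs
  · exact hupdate 0 (by simp)
  · have hbound : ∀ s ∈ Ι (0 : ℝ) (x i), ‖f (Function.update x i s)‖ ≤ M * sqnorm n x :=
      fun s hs => hupdate s <| by
        simpa using Set.abs_sub_left_of_mem_uIcc (Set.uIoc_subset_uIcc hs)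
    calc |∫ s in (0:ℝ)..(x i), f (Function.update x i s)|
          ≤ M * sqnorm n x * |x i - 0| :=
            intervalIntegral.norm_integral_le_of_norm_le_const hbound
      _ ≤ M * sqnorm n x :=
            mul_le_of_le_one_right (mul_nonneg hM (sqnorm_nonneg x)) (by simpa using hx i)

end Cube

theorem gop_weighted_gain_general (n : ℕ) (i : Fin n) (j : ℕ)
    (f : (Fin n → ℝ) → ℝ) (hf : ContinuousOn f (cubeB n))
    (hbd : ∃ C : ℝ, ∀ x ∈ cubeB n \ {0}, |f x| / sqnorm n x ≤ C) :
    sSup ((fun x => |gop n i j f x| / sqnorm n x) '' (cubeB n \ {0})) ≤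
      sSup ((fun x => |f x| / sqnorm n x) '' (cubeB n \ {0})) := by
  set M := sSup ((fun x => |f x| / sqnorm n x) '' (cubeB n \ {0}))
  have hM : 0 ≤ M := Real.sSup_nonneg <| by
    rintro _ ⟨x, -, rfl⟩
    exact div_nonneg (abs_nonneg _) (sqnorm_nonneg x)
  have hbdd : BddAbove ((fun x => |f x| / sqnorm n x) '' (cubeB n \ {0})) := by
    obtain ⟨C, hC⟩ := hbd
    exact ⟨C, by rintro _ ⟨x, hx, rfl⟩; exact hC x hx⟩
  have hfM : ∀ y ∈ cubeB n \ {0}, |f y| ≤ M * sqnorm n y := fun y hy =>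
    (div_le_iff₀ (sqnorm_pos hy.2)).mp (le_csSup hbdd ⟨y, hy, rfl⟩)
  refine Real.sSup_le ?_ hM
  rintro _ ⟨x, ⟨hx, hx0⟩, rfl⟩
  have : Nonempty (Fin n) := not_isEmpty_iff.mp fun _ => hx0 (Subsingleton.elim x 0)
  rw [div_le_iff₀ (sqnorm_pos hx0)]
  exact abs_gop_le hM (abs_le_mul_sqnorm_of_continuousOn hf hfM) i j hx

/-- for every `i ∈ {1,…,n}`, `j ∈ {0,1}` and every continuous
`f : B → ℝ` with `f(x)/(xᵀx)` bounded on `B ∖ {0}`, the weighted gain bound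
`sup_{x ∈ B, x ≠ 0} |(g_{i,j} f)(x)|/(xᵀx) ≤ sup_{x ∈ B, x ≠ 0} |f(x)|/(xᵀx)`
holds. -/
theorem gop_weighted_gain (n : ℕ) (i : Fin n) (j : ℕ) (hj : j = 0 ∨ j = 1)
    (f : (Fin n → ℝ) → ℝ) (hf : ContinuousOn f (cubeB n))
    (hbd : ∃ C : ℝ, ∀ x ∈ cubeB n \ {0}, |f x| / sqnorm n x ≤ C) :
    sSup ((fun x => |gop n i j f x| / sqnorm n x) '' (cubeB n \ {0})) ≤
      sSup ((fun x => |f x| / sqnorm n x) '' (cubeB n \ {0})) :=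
  gop_weighted_gain_general n i j f hf hbd
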